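/- Let (S_n)_{n≥1} be a nested decreasing sequence of k-solenoids of class C^{r,s} and transversal dimension l (each S_{n+1} a nonempty compact subset of S_n which is a union of leaves). Then the intersection S_∞ = ⋂_n S_n is a nonempty k-solenoid of class C^{r,s} and transversal dimension l. Consequently, the space of k-solenoids of class C^{r,s} and transversal dimension l ordered by inclusion is an inductive set and possesses minimal elements. -/

import Mathlib

open Set Topology Metric Filter

noncomputable section

/-- Euclidean space `ℝ^n`. -/
abbrev Euc (n : ℕ) : Type := EuclideanSpace ℝ (Fin n)

/-- The open unit disk `D^k ⊆ ℝ^k`. -/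
def Disk (k : ℕ) : Set (Euc k) := Metric.ball 0 1

/-- A flow-box for a `k`-dimensional lamination structure with `l`-dimensional
transversals on a topological space `X`, with leaves encoded by `leaf`:
a chart `φ : U → D^k × K(U)`, `K(U) ⊆ ℝ^l`, which is a homeomorphism onto its
image and whose plaques `φ⁻¹(D^k × {y})` lie inside leaves. -/
structure FlowBox (k l : ℕ) (X : Type) [TopologicalSpace X] (leaf : X → Set X) where
  chart : PartialHomeomorph X (Euc k × Euc l)
  K : Set (Euc l)
  target_eq : chart.target = (Disk k) ×ˢ K
  plaque_subset_leaf : ∀ x ∈ chart.source, ∀ y ∈ chart.source,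
    (chart x).2 = (chart y).2 → y ∈ leaf x

/-- The plaque of a flow-box over the transversal point `y`. -/
def FlowBox.plaque {k l : ℕ} {X : Type} [TopologicalSpace X] {leaf : X → Set X}
    (c : FlowBox k l X leaf) (y : Euc l) : Set X :=
  {x ∈ c.chart.source | (c.chart x).2 = y}

/-- The canonical local transversal `φ⁻¹({0} × K(U))` of a flow-box. -/
def FlowBox.transversal {k l : ℕ} {X : Type} [TopologicalSpace X] {leaf : X → Set X}
    (c : FlowBox k l X leaf) : Set X :=
  c.chart.symm '' (({(0 : Euc k)} : Set (Euc k)) ×ˢ c.K)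

/-- An (abstract) `k`-solenoid with `l`-dimensional transversal structure:
a nonempty compact Hausdorff space partitioned into `k`-dimensional
connected leaves, covered by flow-boxes `U ≅ D^k × K(U)` with `K(U) ⊆ ℝ^l`
whose plaques lie inside the leaves.  (This is the topological content of a
`k`-solenoid of class `C^{r,s}` and transversal dimension `l`.) -/
structure Solenoid (k l : ℕ) (X : Type) [TopologicalSpace X] : Type 1 where
  cpt : CompactSpace X
  t2 : T2Space X
  nonempty : Nonempty X
  /-- the leaf through a point -/
  leaf : X → Set X
  mem_leaf : ∀ x, x ∈ leaf x
  leaf_eq : ∀ x y, y ∈ leaf x → leaf y = leaf x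
  leaf_connected : ∀ x, IsConnected (leaf x)
  /-- the atlas of flow-boxes -/
  atlas : Set (FlowBox k l X leaf)
  atlas_cover : ∀ x, ∃ c ∈ atlas, x ∈ c.chart.source

namespace Solenoid

variable {k l : ℕ} {X : Type} [TopologicalSpace X]

/-- A set is saturated if it is a union of leaves. -/
def Saturated (S : Solenoid k l X) (C : Set X) : Prop := ∀ x ∈ C, S.leaf x ⊆ C

/-- A sub-solenoid: a nonempty compact union of leaves. -/
def IsSubSolenoid (S : Solenoid k l X) (C : Set X) : Prop :=
  C.Nonempty ∧ IsCompact C ∧ S.Saturated C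

/-- A solenoid is minimal if it has no proper sub-solenoid. -/
def Minimal (S : Solenoid k l X) : Prop :=
  ∀ C : Set X, S.IsSubSolenoid C → C = univ

/-- `T` is a local transversal at `p`: `p ∈ T` and `T = φ⁻¹({0} × K(U))` for
some flow-box `(U, φ)` of `S` containing `p`. -/
def IsLocalTransversalAt (S : Solenoid k l X) (T : Set X) (p : X) : Prop :=
  p ∈ T ∧ ∃ c ∈ S.atlas, p ∈ c.chart.source ∧ T = c.transversal

/-- A transversal: a compact set which near each of its points is a local
transversal. -/
def IsTransversal (S : Solenoid k l X) (T : Set X) : Prop :=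
  IsCompact T ∧ ∀ p ∈ T, ∃ V : Set X, IsOpen V ∧ p ∈ V ∧
    S.IsLocalTransversalAt (V ∩ T) p

/-- A global transversal: a transversal meeting every leaf. -/
def IsGlobalTransversal (S : Solenoid k l X) (T : Set X) : Prop :=
  S.IsTransversal T ∧ ∀ x : X, (S.leaf x ∩ T).Nonempty

/-- The holonomy pseudo-group of a solenoid: generated by the elementary
holonomies inside flow-boxes (sliding between parallel local transversals),
closed under composition and restriction. `Holonomy S V h` means that `h`,
restricted to `V`, is a holonomy map of the solenoid. -/
inductive Holonomy (S : Solenoid k l X) : Set X → (X → X) → Prop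
  | elem (c : FlowBox k l X S.leaf) (hc : c ∈ S.atlas) (x₁ x₂ : Euc k)
      (h₁ : x₁ ∈ Disk k) (h₂ : x₂ ∈ Disk k) :
      Holonomy S (c.chart.symm '' (({x₁} : Set (Euc k)) ×ˢ c.K))
        (fun p => c.chart.symm (x₂, (c.chart p).2))
  | comp (V : Set X) (f g : X → X) :
      Holonomy S V f → Holonomy S (f '' V) g → Holonomy S V (g ∘ f)
  | restrict (V W : Set X) (f : X → X) : Holonomy S V f → W ⊆ V → Holonomy S W f

end Solenoid

section MeasurePart

open MeasureTheory

/-- The support of a (Borel) measure: points all whose open neighbourhoods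
have positive measure. -/
def measSupport {X : Type} [TopologicalSpace X] [MeasurableSpace X] (μ : Measure X) : Set X :=
  {x | ∀ U : Set X, IsOpen U → x ∈ U → 0 < μ U}

/-- A transversal measure on a solenoid: an assignment `T ↦ μ_T` of a measure
supported on `T` to each local transversal `T`, locally finite, invariant under
the holonomy pseudo-group, and non-trivial. -/
structure TransversalMeasure {k l : ℕ} {X : Type} [TopologicalSpace X]
    [MeasurableSpace X] (S : Solenoid k l X) : Type 1 where
  m : Set X → Measure X
  supported : ∀ T p, S.IsLocalTransversalAt T p → m T Tᶜ = 0
  locallyFinite : ∀ T p, S.IsLocalTransversalAt T p →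
    ∀ C ⊆ T, IsCompact C → m T C < ⊤
  invariant : ∀ T₁ p₁ T₂ p₂, S.IsLocalTransversalAt T₁ p₁ →
    S.IsLocalTransversalAt T₂ p₂ → ∀ (V : Set X) (h : X → X), S.Holonomy V h →
    V ⊆ T₁ → h '' V ⊆ T₂ →
    Measure.map h ((m T₁).restrict V) = (m T₂).restrict (h '' V)
  nontrivial : ∃ T p, S.IsLocalTransversalAt T p ∧ m T ≠ 0

namespace TransversalMeasure

variable {k l : ℕ} {X : Type} [TopologicalSpace X] [MeasurableSpace X]
  {S : Solenoid k l X}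

/-- The support of a transversal measure: the union of the supports of the
measures of all local transversals. -/
def support (μ : TransversalMeasure S) : Set X :=
  ⋃ (T : Set X) (p : X) (_ : S.IsLocalTransversalAt T p), measSupport (μ.m T)

/-- A Borel subset `A` of a local transversal `T` is invariant by the holonomy
pseudo-group on `T` if every holonomy map from a subset of `T` into `T`
preserves membership in `A`. -/
def HolInvariantIn (S : Solenoid k l X) (A T : Set X) : Prop :=
  ∀ (V : Set X) (h : X → X), S.Holonomy V h → V ⊆ T → h '' V ⊆ T →
    (∀ x ∈ A ∩ V, h x ∈ A) ∧ (∀ x ∈ V, h x ∈ A → x ∈ A)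

/-- Ergodicity of a transversal measure: any holonomy-invariant Borel subset of
a local transversal has zero or full measure. -/
def IsErgodic (μ : TransversalMeasure S) : Prop :=
  ∀ T p, S.IsLocalTransversalAt T p → ∀ A ⊆ T, MeasurableSet A →
    HolInvariantIn S A T → μ.m T A = 0 ∨ μ.m T A = μ.m T T

end TransversalMeasure

/-- Two transversal measures are proportional (by a finite positive scalar). -/
def TransversalMeasure.Proportional {k l : ℕ} {X : Type} [TopologicalSpace X]
    [MeasurableSpace X] {S : Solenoid k l X} (μ ν : TransversalMeasure S) : Prop :=
  ∃ c : ENNReal, 0 < c ∧ c < ⊤ ∧ ∀ T : Set X, ν.m T = c • μ.m T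

/-- A solenoid is (transversally) uniquely ergodic if it carries a transversal
measure, unique up to a positive scalar, and of full support. -/
def Solenoid.UniquelyErgodic {k l : ℕ} {X : Type} [TopologicalSpace X]
    [MeasurableSpace X] (S : Solenoid k l X) : Prop :=
  Nonempty (TransversalMeasure S) ∧
  (∀ μ ν : TransversalMeasure S, μ.Proportional ν) ∧
  ∀ μ : TransversalMeasure S, μ.support = univ


/-! ### Oriented 1-solenoids via flows -/

/-- An oriented `1`-solenoid, presented through a parametrization of its
(oriented) leaves by a continuous non-singular flow: the leaves are exactly
the orbits of the flow, positively oriented. -/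
structure OrientedFlowSolenoid (l : ℕ) (X : Type) [TopologicalSpace X]
    extends Solenoid 1 l X where
  flow : ℝ → X → X
  flow_cont : Continuous fun p : ℝ × X => flow p.1 p.2
  flow_zero : ∀ x, flow 0 x = x
  flow_add : ∀ s t x, flow (s + t) x = flow s (flow t x)
  flow_leaf : ∀ x, leaf x = Set.range fun t => flow t x
  nonsingular : ∀ x, ∃ t : ℝ, flow t x ≠ x

namespace OrientedFlowSolenoid

variable {l : ℕ} {X : Type} [TopologicalSpace X]

/-- `R` is the Poincaré first-return map of the transversal `T`, with return
time `τ`: for each `x ∈ T`, the positively oriented half-leaf through `x` first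
meets `T` again at time `τ x > 0`, at the point `R x`. -/
def IsReturnMap (S : OrientedFlowSolenoid l X) (T : Set X) (R : X → X)
    (τ : X → ℝ) : Prop :=
  ∀ x ∈ T, 0 < τ x ∧ S.flow (τ x) x ∈ T ∧ R x = S.flow (τ x) x ∧
    ∀ s : ℝ, 0 < s → s < τ x → S.flow s x ∉ T

/-- The Poincaré return map of `T` is well defined (for the given orientation). -/
def ReturnMapDefined (S : OrientedFlowSolenoid l X) (T : Set X) : Prop :=
  ∀ x ∈ T, ∃ t : ℝ, 0 < t ∧ S.flow t x ∈ T

/-- The Poincaré return map for the reversed orientation is well defined. -/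
def ReverseReturnMapDefined (S : OrientedFlowSolenoid l X) (T : Set X) : Prop :=
  ∀ x ∈ T, ∃ t : ℝ, t < 0 ∧ S.flow t x ∈ T

end OrientedFlowSolenoid

/-! ### Lengths of paths and curves -/

/-- The length (total variation) of a curve `c : ℝ → M` on the interval `[a,b]`. -/
def curveLength {M : Type} [PseudoEMetricSpace M] (c : ℝ → M) (a b : ℝ) : ENNReal :=
  eVariationOn c (Set.Icc a b)

/-- The length of a path in a metric space. -/
def pathLength {M : Type} [PseudoEMetricSpace M] {x y : M} (p : Path x y) : ENNReal :=
  eVariationOn (fun t : ℝ => p.extend t) (Set.Icc (0:ℝ) 1)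

/-- The restriction of a continuous curve `c : ℝ → M` to `[s,t]`, as a `Path`. -/
def segPath {M : Type} [TopologicalSpace M] (c : C(ℝ, M)) (s t : ℝ) :
    Path (c s) (c t) where
  toFun u := c (s + (u : ℝ) * (t - s))
  continuous_toFun := by fun_prop
  source' := by simp
  target' := by simp


end MeasurePart

section MeasurePart2
open MeasureTheory

/-! ### Riemannian solenoids: leaf-wise volume, daval measures -/

/-- A Riemannian `k`-solenoid, abstracted through its leaf-wise `k`-volume:
a Borel measure on `X` which restricts to the Riemannian `k`-volume on each
leaf (so each plaque has finite positive volume). -/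
structure RiemannianSolenoid (k l : ℕ) (X : Type) [TopologicalSpace X]
    [MeasurableSpace X] extends Solenoid k l X where
  vol : Measure X
  plaque_vol_pos : ∀ c ∈ atlas, ∀ y ∈ c.K, 0 < vol (c.plaque y)
  plaque_vol_fin : ∀ c ∈ atlas, ∀ y ∈ c.K, vol (c.plaque y) < ⊤

namespace RiemannianSolenoid

variable {k l : ℕ} {X : Type} [TopologicalSpace X] [MeasurableSpace X]

/-- A daval measure: a measure which disintegrates as leaf-wise volume on every
flow-box: `μ(A) = ∫_T Vol_k(A_y) dμ_{U,T}(y)`. -/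
def IsDaval (S : RiemannianSolenoid k l X) (μ : Measure X) : Prop :=
  ∀ c ∈ S.atlas, ∃ ν : Measure (Euc l), (∀ B : Set (Euc l), ν B = ν (B ∩ c.K)) ∧
    ∀ A : Set X, MeasurableSet A → A ⊆ c.chart.source →
      μ A = ∫⁻ y, S.vol (A ∩ c.plaque y) ∂ν

/-- Compatibility between a measure `μ` on `X` and a transversal measure
`(ν_T)`: on every flow-box, `μ` disintegrates as leaf-wise volume with
transversal part `ν` on the canonical local transversal of the box. -/
def Compatible (S : RiemannianSolenoid k l X) (μ : Measure X)
    (ν : TransversalMeasure S.toSolenoid) : Prop :=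
  ∀ c ∈ S.atlas, ∀ A : Set X, MeasurableSet A → A ⊆ c.chart.source →
    μ A = ∫⁻ p, S.vol (A ∩ c.plaque ((c.chart p).2)) ∂(ν.m c.transversal)

/-- Membership in the flow group `G_S^0`: a homeomorphism of the solenoid
preserving the leaf-wise `k`-volume and the foliated structure, isotopic to the
identity within homeomorphisms of `X`. -/
def InFlowGroup (S : RiemannianSolenoid k l X) (h : X ≃ₜ X) : Prop :=
  (∀ A : Set X, S.vol (h '' A) = S.vol A) ∧
  (∀ x : X, h '' S.leaf x = S.leaf (h x)) ∧
  ∃ H : ℝ → X → X, Continuous (fun p : ℝ × X => H p.1 p.2) ∧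
    (∀ x, H 0 x = x) ∧ (∀ x, H 1 x = h x) ∧ ∀ t : ℝ, IsHomeomorph (H t)

/-- An exhaustion of the leaf `L` by compact sets. -/
def IsExhaustion (S : RiemannianSolenoid k l X) (L : Set X) (C : ℕ → Set X) : Prop :=
  (∃ x, S.leaf x = L) ∧ (∀ n, IsCompact (C n) ∧ C n ⊆ L) ∧
  (∀ n, C n ⊆ C (n + 1)) ∧ (⋃ n, C n) = L

/-- The union of the plaques of the flow-box `c` which are entirely contained
in `C` (the regular part `A_n` of `C ∩ U`). -/
def fullPlaques (c : FlowBox k l X leaf) (C : Set X) : Set X :=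
  ⋃ y ∈ {y ∈ c.K | c.plaque y ⊆ C}, c.plaque y

/-- Controlled growth with respect to a leaf `L` and an exhaustion `(C_n)`:
there is a finite covering of `S` by flow-boxes such that in each of them the
volume of the badly-cut part of `C_n` is negligible with respect to the volume
of the union of the full plaques contained in `C_n`. -/
def ControlledGrowthWrt (S : RiemannianSolenoid k l X) (L : Set X)
    (C : ℕ → Set X) : Prop :=
  S.IsExhaustion L C ∧
  ∃ F : Set (FlowBox k l X S.leaf), F.Finite ∧ F ⊆ S.atlas ∧
    (∀ x : X, ∃ c ∈ F, x ∈ c.chart.source) ∧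
    ∀ c ∈ F, Tendsto
      (fun n => S.vol ((C n ∩ c.chart.source) \ fullPlaques c (C n)) /
        S.vol (fullPlaques c (C n))) atTop (nhds 0)

/-- Controlled growth: some leaf with some exhaustion has controlled growth. -/
def ControlledGrowth (S : RiemannianSolenoid k l X) : Prop :=
  ∃ L C, S.ControlledGrowthWrt L C

end RiemannianSolenoid

/-- Weak-* convergence of a sequence of measures on a compact space. -/
def WeakLimit {X : Type} [TopologicalSpace X] [MeasurableSpace X]
    (μn : ℕ → Measure X) (μ : Measure X) : Prop :=
  ∀ f : C(X, ℝ), Tendsto (fun n => ∫ x, f x ∂(μn n)) atTop (nhds (∫ x, f x ∂μ))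

/-- A Schwartzman measure: a weak-* limit of normalized leaf-wise volumes of an
exhaustion of a leaf. -/
def RiemannianSolenoid.IsSchwartzman {k l : ℕ} {X : Type} [TopologicalSpace X]
    [MeasurableSpace X] (S : RiemannianSolenoid k l X) (μ : Measure X) : Prop :=
  IsProbabilityMeasure μ ∧ ∃ L : Set X, ∃ C : ℕ → Set X, S.IsExhaustion L C ∧
    (∀ n, 0 < S.vol (C n) ∧ S.vol (C n) < ⊤) ∧
    WeakLimit (fun n => (S.vol (C n))⁻¹ • S.vol.restrict (C n)) μ


end MeasurePart2

/-! ### Real 1-homology data, closed 1-forms, Schwartzman asymptotic cycles -/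

/-- The integral of a closed smooth `1`-form on `M`, abstracted as an additive,
homotopy-invariant, length-bounded path integrator. -/
structure ClosedOneForm (M : Type) [EMetricSpace M] where
  I : ∀ {x y : M}, Path x y → ℝ
  add : ∀ {x y z : M} (p : Path x y) (q : Path y z), I (p.trans q) = I p + I q
  homotopy_invariant : ∀ {x y : M} (p q : Path x y), Path.Homotopic p q → I p = I q
  bound : ∃ C : ℝ, 0 ≤ C ∧ ∀ {x y : M} (p : Path x y),
    ENNReal.ofReal (|I p|) ≤ ENNReal.ofReal C * pathLength p

/-- Data for the first real homology `H = H_1(M,ℝ)` of a compact manifold `M`: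
a finite-dimensional real normed space together with the class map on loops
(factoring through free homotopy, additive under concatenation, with classes of
loops spanning `H`), and the (de Rham) pairing with closed `1`-forms, which
separates points of `H`. -/
structure H1Data (M : Type) [EMetricSpace M] where
  H : Type
  [nacg : NormedAddCommGroup H]
  [nsp : NormedSpace ℝ H]
  finDim : FiniteDimensional ℝ H
  /-- the real homology class of a loop -/
  cls : ∀ {p : M}, Path p p → H
  cls_homotopic : ∀ {p : M} (γ γ' : Path p p), Path.Homotopic γ γ' → cls γ = cls γ'
  cls_trans : ∀ {p : M} (γ γ' : Path p p), cls (γ.trans γ') = cls γ + cls γ'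
  cls_conj : ∀ {p q : M} (α : Path p q) (γ : Path q q),
    cls ((α.trans γ).trans α.symm) = cls γ
  cls_span : ∀ v : H, v ∈ Submodule.span ℝ (Set.range fun γp : Σ p : M, Path p p => cls γp.2)
  /-- the pairing of homology classes with (classes of) closed 1-forms -/
  pair : ClosedOneForm M → H →ₗ[ℝ] ℝ
  pair_cls : ∀ (ω : ClosedOneForm M) {p : M} (γ : Path p p), pair ω (cls γ) = ω.I γ
  pair_separates : ∀ v : H, (∀ ω : ClosedOneForm M, pair ω v = 0) → v = 0

attribute [instance] H1Data.nacg H1Data.nsp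

/-- A closing family for a parametrized curve `c`: for all `s, t` a rectifiable
curve `γ s t` from `c t` back to `c s`, of length negligible with respect to
`t - s` as `t → +∞`, `s → −∞`. -/
structure Closing {M : Type} [EMetricSpace M] (c : C(ℝ, M)) where
  γ : ∀ s t : ℝ, Path (c t) (c s)
  rect : ∀ s t : ℝ, pathLength (γ s t) ≠ ⊤
  small : Tendsto (fun p : ℝ × ℝ => (pathLength (γ p.1 p.2)).toReal / (p.2 - p.1))
    (Filter.atBot ×ˢ Filter.atTop) (nhds 0)

/-- The closed loop `c_{s,t}`: the piece `c|_{[s,t]}` closed by `γ s t`. -/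
def Closing.loop {M : Type} [EMetricSpace M] {c : C(ℝ, M)} (cl : Closing c)
    (s t : ℝ) : Path (c s) (c s) :=
  (segPath c s t).trans (cl.γ s t)

/-- `c` is a Schwartzman asymptotic 1-cycle with Schwartzman asymptotic
homology class `a`: for some (hence any) closing family, the normalized classes
`[c_{s,t}]/(t−s)` converge to `a` as `t → +∞`, `s → −∞`. -/
def IsSchwartzmanCycle {M : Type} [EMetricSpace M] (D : H1Data M) (c : C(ℝ, M))
    (a : D.H) : Prop :=
  ∃ cl : Closing c,
    Tendsto (fun p : ℝ × ℝ => ((p.2 - p.1)⁻¹ : ℝ) • D.cls (cl.loop p.1 p.2))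
      (Filter.atBot ×ˢ Filter.atTop) (nhds a)

/-- `v` belongs to the Schwartzman cluster of the parametrized curve `c`:
it is a limit of normalized classes `[c_{s_n,t_n}]/(t_n−s_n)` along sequences
`t_n → +∞`, `s_n → −∞`, for some closing family. -/
def InSchwartzmanCluster {M : Type} [EMetricSpace M] (D : H1Data M) (c : C(ℝ, M))
    (v : D.H) : Prop :=
  ∃ cl : Closing c, ∃ s t : ℕ → ℝ, Tendsto s atTop atBot ∧ Tendsto t atTop atTop ∧
    (∀ n, s n < t n) ∧
    Tendsto (fun n => ((t n - s n)⁻¹ : ℝ) • D.cls (cl.loop (s n) (t n)))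
      atTop (nhds v)



/-! ### Leaf curves, generalized (Ruelle–Sullivan) currents of 1-solenoids -/

section CurrentPart
open MeasureTheory

variable {l : ℕ} {X M : Type} [TopologicalSpace X] [MeasurableSpace X]
  [EMetricSpace M]

/-- The path along the flow from `x` to `flow τ x`. -/
def flowPath (S : OrientedFlowSolenoid l X) (x : X) (τ : ℝ) :
    Path x (S.flow τ x) where
  toFun u := S.flow ((u : ℝ) * τ) x
  continuous_toFun := S.flow_cont.comp
    ((continuous_subtype_val.mul continuous_const).prodMk continuous_const)
  source' := by simp [S.flow_zero]
  target' := by simp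

/-- The leaf of `x`, parametrized by the flow reparametrized by `ψ` and
pushed to `M` by `f`. -/
def leafCurve (S : OrientedFlowSolenoid l X) (f : C(X, M)) (ψ : C(ℝ, ℝ)) (x : X) :
    C(ℝ, M) :=
  ⟨fun t => f (S.flow (ψ t) x),
    f.continuous.comp (S.flow_cont.comp (ψ.continuous.prodMk continuous_const))⟩

/-- The leaf of `x`, with its given (arc-length) parametrization, pushed to `M`. -/
def leafCurve₀ (S : OrientedFlowSolenoid l X) (f : C(X, M)) (x : X) : C(ℝ, M) :=
  leafCurve S f ⟨id, continuous_id⟩ x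

/-- The flow of `S` parametrizes the leaves by arc-length for the metric on `M`
pulled back by `f` (i.e. `S` carries the pull-back Riemannian metric and its
leaves are parametrized positively by arc-length). -/
def ArcLengthFlow (S : OrientedFlowSolenoid l X) (f : C(X, M)) : Prop :=
  ∀ (x : X) (a b : ℝ), a ≤ b →
    curveLength (fun t => f (S.flow t x)) a b = ENNReal.ofReal (b - a)

/-- `f` is an immersion along the leaves (leaf-wise locally injective). -/
def LeafImmersion (S : OrientedFlowSolenoid l X) (f : C(X, M)) : Prop :=
  ∀ x : X, ∃ ε : ℝ, 0 < ε ∧ Set.InjOn (fun t => f (S.flow t x)) (Icc (-ε) ε)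

/-- `a ∈ H_1(M,ℝ)` is the generalized (Ruelle–Sullivan) current `[f, S_μ]` of
the immersed oriented measured 1-solenoid `(f, S_μ)`: for every closed 1-form
`ω`, the pairing `⟨a, [ω]⟩` equals the `μ`-average over a global transversal of
the integrals of `f^*ω` along the first-return leaf segments (which is the
total integral `∫_S f^*ω dμ` of the Ruelle–Sullivan definition, computed in
flow-boxes). -/
def IsGenCurrent1 (S : OrientedFlowSolenoid l X) (f : C(X, M)) (D : H1Data M)
    (μ : TransversalMeasure S.toSolenoid) (a : D.H) : Prop :=
  ∀ (T : Set X) (R : X → X) (τ : X → ℝ), S.toSolenoid.IsGlobalTransversal T →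
    S.IsReturnMap T R τ → ∀ ω : ClosedOneForm M,
      D.pair ω a = ∫ x in T, ω.I ((flowPath S x (τ x)).map f.continuous) ∂(μ.m T)

/-- The transversal measure `μ` is normalized: the associated daval measure is
a probability measure (its total mass, computed over a global transversal by
the return-time integral, is `1`). -/
def NormalizedTM (S : OrientedFlowSolenoid l X) (μ : TransversalMeasure S.toSolenoid) :
    Prop :=
  ∀ (T : Set X) (R : X → X) (τ : X → ℝ), S.toSolenoid.IsGlobalTransversal T →
    S.IsReturnMap T R τ → ∫ x in T, τ x ∂(μ.m T) = 1

/-- A set is null-transverse for `μ`: it meets every local transversal in a set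
of `μ_T`-measure zero ("a zero `μ`-measure set of leaves"). -/
def NullTransverse {k : ℕ} (S : Solenoid k l X) (μ : TransversalMeasure S)
    (B : Set X) : Prop :=
  ∀ T p, S.IsLocalTransversalAt T p → μ.m T (B ∩ T) = 0

/-- The Ruelle–Sullivan cluster cone of `(f,S)`: the set of generalized
currents `[f,S_μ]` over all transversal measures `μ` of `S`. -/
def RSClusterCone (S : OrientedFlowSolenoid l X) (f : C(X, M)) (D : H1Data M) :
    Set D.H :=
  {a | ∃ μ : TransversalMeasure S.toSolenoid, IsGenCurrent1 S f D μ a}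

/-- The homology cluster `C(f,S)` of the immersed solenoid: all Schwartzman
cluster values of all orientation-preserving parametrizations of leaves. -/
def InHomologyCluster (S : OrientedFlowSolenoid l X) (f : C(X, M)) (D : H1Data M)
    (v : D.H) : Prop :=
  ∃ (x : X) (ψ : C(ℝ, ℝ)), StrictMono ψ ∧ Function.Surjective ψ ∧
    InSchwartzmanCluster D (leafCurve S f ψ x) v

end CurrentPart

end

/-! Cantor's intersection theorem makes a directed intersection of sub-solenoids nonempty, and
it is compact and saturated because each member is. Hence every chain of sub-solenoids has a
lower bound, and Zorn's lemma yields minimal sub-solenoids. -/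

namespace Solenoid

variable {k l : ℕ} {X : Type} [TopologicalSpace X] {S : Solenoid k l X}

theorem Saturated.iInter {ι : Type*} {t : ι → Set X} (ht : ∀ i, S.Saturated (t i)) :
    S.Saturated (⋂ i, t i) :=
  fun x hx => subset_iInter fun i => ht i x (mem_iInter.mp hx i)

theorem IsSubSolenoid.iInter_of_directed {ι : Type*} [Nonempty ι] {t : ι → Set X}
    (ht : ∀ i, S.IsSubSolenoid (t i)) (hdir : Directed (· ⊇ ·) t) :
    S.IsSubSolenoid (⋂ i, t i) := by
  have := S.t2
  have hclosed : ∀ i, IsClosed (t i) := fun i => (ht i).2.1.isClosed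
  obtain ⟨i₀⟩ := ‹Nonempty ι›
  refine ⟨?_, ?_, Saturated.iInter fun i => (ht i).2.2⟩
  · exact IsCompact.nonempty_iInter_of_directed_nonempty_isCompact_isClosed t hdir
      (fun i => (ht i).1) (fun i => (ht i).2.1) hclosed
  · exact (ht i₀).2.1.of_isClosed_subset (isClosed_iInter hclosed) (iInter_subset t i₀)

theorem isSubSolenoid_iInter_of_succ_subset {Sn : ℕ → Set X} (hsub : ∀ n, S.IsSubSolenoid (Sn n))
    (hnested : ∀ n, Sn (n + 1) ⊆ Sn n) : S.IsSubSolenoid (⋂ n, Sn n) :=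
  IsSubSolenoid.iInter_of_directed hsub (antitone_nat_of_succ_le hnested).directed_ge

theorem IsSubSolenoid.exists_minimal_subset {C : Set X} (hC : S.IsSubSolenoid C) :
    ∃ M ⊆ C, _root_.Minimal S.IsSubSolenoid M := by
  refine zorn_superset_nonempty {C | S.IsSubSolenoid C} ?_ C hC
  intro c hc hchain hne
  have : Nonempty c := hne.to_subtype
  have hdir : Directed (· ⊇ ·) (fun s : c => (s : Set X)) := fun a b =>
    (hchain.total a.2 b.2).elim (fun hab => ⟨a, subset_rfl, hab⟩) fun hba => ⟨b, hba, subset_rfl⟩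
  exact ⟨⋂ s : c, (s : Set X), IsSubSolenoid.iInter_of_directed (fun s => hc s.2) hdir,
    fun s hs => iInter_subset_of_subset ⟨s, hs⟩ subset_rfl⟩

end Solenoid

/-- Let `(S_n)` be a nested decreasing sequence of
(sub-)`k`-solenoids of class `C^{r,s}` and transversal dimension `l` inside the
solenoid `S` (each `S_{n+1}` a nonempty compact subset of `S_n` which is a
union of leaves).  Then `S_∞ = ⋂_n S_n` is a nonempty `k`-solenoid (nonempty
compact union of leaves).  Consequently the space of `k`-solenoids ordered by
inclusion is inductive and possesses minimal elements. -/
theorem stmt_0 {k l : ℕ} {X : Type} [TopologicalSpace X] (S : Solenoid k l X)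
    (Sn : ℕ → Set X) (hsub : ∀ n, S.IsSubSolenoid (Sn n))
    (hnested : ∀ n, Sn (n + 1) ⊆ Sn n) :
    S.IsSubSolenoid (⋂ n, Sn n) ∧
    ∃ C : Set X, S.IsSubSolenoid C ∧
      ∀ C' : Set X, S.IsSubSolenoid C' → C' ⊆ C → C' = C := by
  have hinter := Solenoid.isSubSolenoid_iInter_of_succ_subset hsub hnested
  obtain ⟨M, -, hM⟩ := hinter.exists_minimal_subset
  exact ⟨hinter, M, hM.prop, fun C' hC' hle => hM.eq_of_le hC' hle⟩
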